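/- arXiv:0710.1854 — 2 statements merged into one kernel-verified Lean document; each statement's English description precedes it below -/
import Mathlib

section
/- Let Ω ⊂ ℂ be a connected open set, symmetric under complex conjugation and containing an open real interval I, and let C = (x, y) : Ω → ℂ² be holomorphic with C(r) ∈ ℝ² for all r ∈ I (so that C(z̄) is the componentwise complex conjugate of C(z)). For z = s + it ∈ Ω define P(s,t) = (C(z) + C(z̄))/2 ∈ ℝ². Let W be an open subset of {(s,t) : t > 0} such that P restricted to W is a C¹ diffeomorphism onto an open set E ⊂ ℝ², and assume [C'(z), C'(z̄)] ≠ 0 for all corresponding z. Suppose F : E → ℝ is C² and satisfies ∇F(P(s,t)) = (i/2)·R·(C(z) − C(z̄)) for all (s,t) ∈ W (note the right-hand side is a real vector). Then det(D²F) = +1 on E; in particular the graph of F is a definite improper affine sphere. -/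
noncomputable section

/-- Determinant of the 2×2 complex matrix with columns `X`, `Y`. -/
def det2C (X Y : ℂ × ℂ) : ℂ := X.1 * Y.2 - X.2 * Y.1

/-- Counterclockwise rotation by 90 degrees, extended complex-linearly: `R(x,y) = (−y, x)`. -/
def rotC (X : ℂ × ℂ) : ℂ × ℂ := (-X.2, X.1)

/-- Gradient of `F : ℝ² → ℝ`. -/
def grad (F : ℝ × ℝ → ℝ) (p : ℝ × ℝ) : ℝ × ℝ :=
  (fderiv ℝ F p (1, 0), fderiv ℝ F p (0, 1))

/-- Hessian of `F` at `p`, as a bilinear form. -/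
def hess (F : ℝ × ℝ → ℝ) (p : ℝ × ℝ) (a b : ℝ × ℝ) : ℝ :=
  fderiv ℝ (fderiv ℝ F) p a b

/-- Determinant of the Hessian matrix of `F` at `p`. -/
def hessDet (F : ℝ × ℝ → ℝ) (p : ℝ × ℝ) : ℝ :=
  hess F p (1, 0) (1, 0) * hess F p (0, 1) (0, 1)
    - hess F p (1, 0) (0, 1) * hess F p (0, 1) (1, 0)

/-- The complex point `z = s + it` attached to `(s,t) ∈ ℝ²`. -/
def zOf (w : ℝ × ℝ) : ℂ := (w.1 : ℂ) + (w.2 : ℂ) * Complex.I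

/-- Complexification of a real plane vector. -/
def toC2 (x : ℝ × ℝ) : ℂ × ℂ := ((x.1 : ℂ), (x.2 : ℂ))

/-! Since `2⁻¹ (C(z) + C(z̄))` and `(i/2) R (C(z) - C(z̄))` are both real, `C(z̄) = conj C(z)`
on `W`. So for the holomorphic map `c(s, t) = C(s + it)` we get `P = Re c` and
`∇F ∘ P = -R Im c`, and also `C'(z̄) = conj C'(z)`. The chain rule gives
`D²F · DP = D(∇F ∘ P)`, and by the Cauchy–Riemann equations `DP` and `D(∇F ∘ P)` have the same
determinant `Im (x' · conj y')` (where `C' = (x', y')`), which is nonzero since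
`[C'(z), C'(z̄)] = 2i Im (x' · conj y')`. -/

open Complex ComplexConjugate Filter Topology

def det2 (u v : ℝ × ℝ) : ℝ := u.1 * v.2 - u.2 * v.1

section Jacobian

variable {G : Type*} [NormedAddCommGroup G] [NormedSpace ℝ G]

def ofCols (a b : G) : ℝ × ℝ →L[ℝ] G :=
  (ContinuousLinearMap.fst ℝ ℝ ℝ).smulRight a + (ContinuousLinearMap.snd ℝ ℝ ℝ).smulRight b

@[simp] lemma ofCols_apply (a b : G) (u : ℝ × ℝ) : ofCols a b u = u.1 • a + u.2 • b := rfl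

def zCLM : ℝ × ℝ →L[ℝ] ℂ := equivRealProdCLM.symm.toContinuousLinearMap

lemma hasFDerivAt_zOf (w : ℝ × ℝ) : HasFDerivAt zOf zCLM w := by
  convert zCLM.hasFDerivAt using 1
  ext v
  simp [zCLM, zOf, equivRealProdCLM_symm_apply]

lemma HasDerivAt.hasFDerivAt_comp_zOf {E : Type*} [NormedAddCommGroup E] [NormedSpace ℂ E]
    {C : ℂ → E} {d : E} {w : ℝ × ℝ} (hC : HasDerivAt C d (zOf w)) (L : E →L[ℝ] G) :
    HasFDerivAt (fun v => L (C (zOf v))) (ofCols (L d) (L (I • d))) w := by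
  refine (L.hasFDerivAt.comp w ((hC.hasFDerivAt.restrictScalars ℝ).comp w
    (hasFDerivAt_zOf w))).congr_fderiv (ContinuousLinearMap.ext fun u => ?_)
  have hz : zCLM u • d = u.1 • d + u.2 • (I • d) := by
    simp [zCLM, equivRealProdCLM_symm_apply, add_smul, mul_smul]
  simp [hz]

end Jacobian

def hessCLM (F : ℝ × ℝ → ℝ) (p : ℝ × ℝ) : ℝ × ℝ →L[ℝ] ℝ × ℝ :=
  ((ContinuousLinearMap.apply ℝ ℝ ((1 : ℝ), (0 : ℝ))).comp (fderiv ℝ (fderiv ℝ F) p)).prod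
    ((ContinuousLinearMap.apply ℝ ℝ ((0 : ℝ), (1 : ℝ))).comp (fderiv ℝ (fderiv ℝ F) p))

lemma hessCLM_apply (F : ℝ × ℝ → ℝ) (p u : ℝ × ℝ) :
    hessCLM F p u = (hess F p u (1, 0), hess F p u (0, 1)) := rfl

lemma hasFDerivAt_grad {F : ℝ × ℝ → ℝ} {p : ℝ × ℝ}
    (hF : DifferentiableAt ℝ (fderiv ℝ F) p) : HasFDerivAt (grad F) (hessCLM F p) p :=
  ((ContinuousLinearMap.apply ℝ ℝ _).hasFDerivAt.comp p hF.hasFDerivAt).prodMk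
    ((ContinuousLinearMap.apply ℝ ℝ _).hasFDerivAt.comp p hF.hasFDerivAt)

lemma hessDet_mul_det2 (F : ℝ × ℝ → ℝ) (p u v : ℝ × ℝ) :
    hessDet F p * det2 u v = det2 (hessCLM F p u) (hessCLM F p v) := by
  have hcols (u : ℝ × ℝ) :
      hessCLM F p u = u.1 • hessCLM F p (1, 0) + u.2 • hessCLM F p (0, 1) := by
    rw [← map_smul, ← map_smul, ← map_add]
    congr 1
    ext <;> simp
  rw [hcols u, hcols v]
  simp only [det2, hessDet, hessCLM_apply, Prod.fst_add, Prod.snd_add, Prod.smul_fst,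
    Prod.smul_snd, smul_eq_mul]
  ring

lemma hessDet_mul_det2_of_hasFDerivAt {F : ℝ × ℝ → ℝ} {P : ℝ × ℝ → ℝ × ℝ}
    {w a₁ a₂ d₁ d₂ : ℝ × ℝ} (hF : DifferentiableAt ℝ (fderiv ℝ F) (P w))
    (hP : HasFDerivAt P (ofCols a₁ a₂) w)
    (hG : HasFDerivAt (fun v => grad F (P v)) (ofCols d₁ d₂) w) :
    hessDet F (P w) * det2 a₁ a₂ = det2 d₁ d₂ := by
  have hchain := ((hasFDerivAt_grad hF).comp w hP).unique hG
  have h₁ := congrArg (· ((1 : ℝ), (0 : ℝ))) hchain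
  have h₂ := congrArg (· ((0 : ℝ), (1 : ℝ))) hchain
  simp only [ContinuousLinearMap.comp_apply, ofCols_apply, one_smul, zero_smul, add_zero,
    zero_add] at h₁ h₂
  rw [hessDet_mul_det2, h₁, h₂]

lemma eventually_eq_star_comp_conj {F : Type*} [Star F] {C : ℂ → F} {W : Set (ℝ × ℝ)}
    (hW : IsOpen W) (hsymm : ∀ w ∈ W, C (conj (zOf w)) = star (C (zOf w)))
    {w : ℝ × ℝ} (hw : w ∈ W) :
    ∀ᶠ ξ in 𝓝 (conj (zOf w)), C ξ = star (C (conj ξ)) := by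
  have hmem : ∀ᶠ ξ in 𝓝 (conj (zOf w)), (ξ.re, -ξ.im) ∈ W :=
    (by fun_prop : Continuous fun ξ : ℂ => (ξ.re, -ξ.im)).continuousAt.preimage_mem_nhds
      (by simpa [zOf] using hW.mem_nhds hw)
  filter_upwards [hmem] with ξ hξ
  have hz : zOf (ξ.re, -ξ.im) = conj ξ := by apply Complex.ext <;> simp [zOf]
  simpa [hz] using hsymm _ hξ

lemma HasDerivAt.star_of_eventually_eq_star_comp_conj {F : Type*} [NormedAddCommGroup F]
    [NormedSpace ℂ F] [StarAddMonoid F] [StarModule ℂ F] [ContinuousStar F]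
    {C : ℂ → F} {d : F} {z : ℂ}
    (hC : HasDerivAt C d z) (hsymm : ∀ᶠ ξ in 𝓝 (conj z), C ξ = star (C (conj ξ))) :
    HasDerivAt C (star d) (conj z) :=
  hC.star_conj.congr_of_eventuallyEq hsymm

def reProd : ℂ × ℂ →L[ℝ] ℝ × ℝ := reCLM.prodMap reCLM

def negRotIm : ℂ × ℂ →L[ℝ] ℝ × ℝ :=
  (imCLM.comp (ContinuousLinearMap.snd ℝ ℂ ℂ)).prod
    (-(imCLM.comp (ContinuousLinearMap.fst ℝ ℂ ℂ)))

@[simp] lemma reProd_apply (u : ℂ × ℂ) : reProd u = (u.1.re, u.2.re) := rfl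

@[simp] lemma negRotIm_apply (u : ℂ × ℂ) : negRotIm u = (u.2.im, -u.1.im) := rfl

lemma eq_star_of_toC2_eq {u v : ℂ × ℂ} {p g : ℝ × ℝ}
    (hp : toC2 p = (2⁻¹ : ℂ) • (u + v)) (hg : toC2 g = (I / 2) • rotC (u - v)) :
    v = star u ∧ p = reProd u ∧ g = negRotIm u := by
  norm_num [toC2, rotC, Prod.ext_iff, Complex.ext_iff] at hp hg ⊢
  grind

lemma det2C_star (d : ℂ × ℂ) :
    det2C d (star d) = 2 * I * det2 (reProd d) (reProd (I • d)) := by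
  simp only [det2C, det2, Prod.fst_star, Prod.snd_star, RCLike.star_def, reProd_apply,
    Prod.smul_fst, Prod.smul_snd, smul_eq_mul, Complex.ext_iff, sub_re, sub_im, mul_re, mul_im,
    conj_re, conj_im, I_re, I_im, ofReal_re, ofReal_im, re_ofNat, im_ofNat]
  constructor <;> ring

lemma det2_negRotIm (d : ℂ × ℂ) :
    det2 (negRotIm d) (negRotIm (I • d)) = det2 (reProd d) (reProd (I • d)) := by
  simp only [det2, negRotIm_apply, reProd_apply, Prod.smul_fst, Prod.smul_snd, smul_eq_mul,
    mul_re, mul_im, I_re, I_im]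
  ring

theorem statement11_general
    (Ω : Set ℂ) (hΩo : IsOpen Ω)
    (C : ℂ → ℂ × ℂ) (hC : DifferentiableOn ℂ C Ω)
    (W : Set (ℝ × ℝ)) (hWo : IsOpen W)
    (hWΩ : ∀ w ∈ W, zOf w ∈ Ω)
    (P : ℝ × ℝ → ℝ × ℝ)
    (hP : ∀ w ∈ W,
      toC2 (P w) = (2⁻¹ : ℂ) • (C (zOf w) + C (starRingEnd ℂ (zOf w))))
    (E : Set (ℝ × ℝ)) (hEo : IsOpen E)
    (hPbij : Set.BijOn P W E)
    (hCdet : ∀ w ∈ W,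
      det2C (deriv C (zOf w)) (deriv C (starRingEnd ℂ (zOf w))) ≠ 0)
    (F : ℝ × ℝ → ℝ) (hF : ContDiffOn ℝ 2 F E)
    (hgrad : ∀ w ∈ W,
      toC2 (grad F (P w))
        = (Complex.I / 2) • rotC (C (zOf w) - C (starRingEnd ℂ (zOf w)))) :
    ∀ x ∈ E, hessDet F x = 1 := by
  intro q hq
  obtain ⟨w, hw, rfl⟩ := hPbij.surjOn hq
  have hdata (v : ℝ × ℝ) (hv : v ∈ W) := eq_star_of_toC2_eq (hP v hv) (hgrad v hv)
  have hnear : ∀ᶠ v in 𝓝 w, v ∈ W := hWo.mem_nhds hw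
  have hCd : HasDerivAt C (deriv C (zOf w)) (zOf w) :=
    (hC.differentiableAt (hΩo.mem_nhds (hWΩ w hw))).hasDerivAt
  have hPd := (hCd.hasFDerivAt_comp_zOf reProd).congr_of_eventuallyEq
    (hnear.mono fun v hv => (hdata v hv).2.1)
  have hGd := (hCd.hasFDerivAt_comp_zOf negRotIm).congr_of_eventuallyEq
    (hnear.mono fun v hv => (hdata v hv).2.2)
  have hFd : DifferentiableAt ℝ (fderiv ℝ F) (P w) :=
    (((hF _ (hPbij.mapsTo hw)).contDiffAt (hEo.mem_nhds (hPbij.mapsTo hw))).fderiv_right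
      (m := 1) le_rfl).differentiableAt one_ne_zero
  have hdet := hessDet_mul_det2_of_hasFDerivAt hFd hPd hGd
  rw [det2_negRotIm] at hdet
  have hδ : det2 (reProd (deriv C (zOf w))) (reProd (I • deriv C (zOf w))) ≠ 0 := by
    have h := hCdet w hw
    rw [(hCd.star_of_eventually_eq_star_comp_conj (eventually_eq_star_comp_conj hWo
      (fun v hv => (hdata v hv).1) hw)).deriv, det2C_star] at h
    exact_mod_cast right_ne_zero_of_mul h
  exact mul_right_cancel₀ hδ (hdet.trans (one_mul _).symm)

/-- If `F` satisfies `∇F(P(s,t)) = (i/2)·R·(C(z) − C(z̄))`, where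
`P(s,t) = (C(z) + C(z̄))/2` for a holomorphic curve `C` that is real on the real interval
`I`, then `det(D²F) = +1` on `E = P(W)`: the graph of the outer area distance `F` is
a definite improper affine sphere. -/
theorem statement11
    (Ω : Set ℂ) (hΩo : IsOpen Ω) (hΩconn : IsPreconnected Ω)
    (hΩsym : ∀ z ∈ Ω, starRingEnd ℂ z ∈ Ω)
    (a b : ℝ) (hab : a < b) (hIΩ : ∀ r : ℝ, r ∈ Set.Ioo a b → (r : ℂ) ∈ Ω)
    (C : ℂ → ℂ × ℂ) (hC : DifferentiableOn ℂ C Ω)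
    (hreal : ∀ r : ℝ, r ∈ Set.Ioo a b → (C r).1.im = 0 ∧ (C r).2.im = 0)
    (W : Set (ℝ × ℝ)) (hWo : IsOpen W) (hWt : ∀ w ∈ W, 0 < w.2)
    (hWΩ : ∀ w ∈ W, zOf w ∈ Ω)
    (P : ℝ × ℝ → ℝ × ℝ)
    (hP : ∀ w ∈ W,
      toC2 (P w) = (2⁻¹ : ℂ) • (C (zOf w) + C (starRingEnd ℂ (zOf w))))
    (E : Set (ℝ × ℝ)) (hEo : IsOpen E)
    (hPreg : ContDiffOn ℝ 1 P W) (hPbij : Set.BijOn P W E)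
    (Pinv : ℝ × ℝ → ℝ × ℝ) (hPinv : ContDiffOn ℝ 1 Pinv E)
    (hPinvP : ∀ w ∈ W, Pinv (P w) = w)
    (hCdet : ∀ w ∈ W,
      det2C (deriv C (zOf w)) (deriv C (starRingEnd ℂ (zOf w))) ≠ 0)
    (F : ℝ × ℝ → ℝ) (hF : ContDiffOn ℝ 2 F E)
    (hgrad : ∀ w ∈ W,
      toC2 (grad F (P w))
        = (Complex.I / 2) • rotC (C (zOf w) - C (starRingEnd ℂ (zOf w)))) :
    ∀ x ∈ E, hessDet F x = 1 :=
  statement11_general Ω hΩo C hC W hWo hWΩ P hP E hEo hPbij hCdet F hF hgrad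
end
end

section
/- Define F : E → ℝ on E = {(x,y) ∈ ℝ² : 2y < x²} by F(x,y) = (1/3)·(x² − 2y)^{3/2}. Then F is C² on E with det(D²F)(x,y) = +1 for all (x,y) ∈ E, and F together with its gradient ∇F extends continuously by zero to the boundary parabola {2y = x²}. Hence F is the outer area distance of the parabola y = x²/2 and its graph is a definite improper affine sphere. -/
noncomputable section

open Filter

/-- The outer area distance of the parabola `y = x²/2`:
`F(x,y) = (1/3)(x² − 2y)^{3/2}` on `E = {2y < x²}`. -/
def FParab (w : ℝ × ℝ) : ℝ := (1 / 3) * (w.1 ^ 2 - 2 * w.2) ^ ((3 : ℝ) / 2)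

/-- The outer parabolic region `E = {(x,y) : 2y < x²}`. -/
def EParab : Set (ℝ × ℝ) := {w : ℝ × ℝ | 2 * w.2 < w.1 ^ 2}

/-! With `u = x² − 2y` and `ℓ = (x, −1)` we have `∇F = √u · ℓ`, so
`D²F = √u · e₁ ⊗ e₁ + u^{-1/2} · ℓ ⊗ ℓ`, whose determinant is `√u · u^{-1/2} · det(e₁, ℓ)² = 1`.
Both `F = u^{3/2}/3` and `∇F` are continuous functions of `√u` vanishing where `u = 0`. -/

open Real ContinuousLinearMap

def parabolaGap (w : ℝ × ℝ) : ℝ := w.1 ^ 2 - 2 * w.2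

def parabolaForm (w : ℝ × ℝ) : ℝ × ℝ →L[ℝ] ℝ := w.1 • fst ℝ ℝ ℝ - snd ℝ ℝ ℝ

@[simp]
lemma parabolaForm_apply (w v : ℝ × ℝ) : parabolaForm w v = w.1 * v.1 - v.2 := by
  simp [parabolaForm]

lemma parabolaGap_pos {w : ℝ × ℝ} (hw : w ∈ EParab) : 0 < parabolaGap w :=
  sub_pos.2 hw

lemma parabolaGap_boundary (x : ℝ) : parabolaGap (x, x ^ 2 / 2) = 0 := by
  simp only [parabolaGap]
  ring

lemma isOpen_EParab : IsOpen EParab :=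
  isOpen_lt (by fun_prop) (by fun_prop)

lemma FParab_eq (w : ℝ × ℝ) : FParab w = (1 / 3) * parabolaGap w ^ ((3 : ℝ) / 2) := rfl

lemma hasFDerivAt_parabolaGap (w : ℝ × ℝ) :
    HasFDerivAt parabolaGap ((2 : ℝ) • parabolaForm w) w := by
  have h := ((hasFDerivAt_fst (𝕜 := ℝ) (p := w)).pow 2).sub
    ((hasFDerivAt_snd (𝕜 := ℝ) (p := w)).const_mul (2 : ℝ))
  exact h.congr_fderiv (by ext <;> simp)

lemma hasFDerivAt_parabolaForm (w : ℝ × ℝ) :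
    HasFDerivAt parabolaForm ((fst ℝ ℝ ℝ).smulRight (fst ℝ ℝ ℝ)) w := by
  have h : parabolaForm = fun z => (fst ℝ ℝ ℝ).smulRight (fst ℝ ℝ ℝ) z - snd ℝ ℝ ℝ := by
    funext z
    ext <;> simp
  rw [h]
  exact ((fst ℝ ℝ ℝ).smulRight (fst ℝ ℝ ℝ)).hasFDerivAt.sub_const _

lemma hasFDerivAt_sqrt_parabolaGap {w : ℝ × ℝ} (hw : 0 < parabolaGap w) :
    HasFDerivAt (fun z => √(parabolaGap z)) ((√(parabolaGap w))⁻¹ • parabolaForm w) w := by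
  refine ((hasFDerivAt_parabolaGap w).sqrt hw.ne').congr_fderiv ?_
  rw [smul_smul]
  congr 1
  field_simp

lemma hasFDerivAt_FParab {w : ℝ × ℝ} (hw : 0 < parabolaGap w) :
    HasFDerivAt FParab (√(parabolaGap w) • parabolaForm w) w := by
  have h := ((hasFDerivAt_parabolaGap w).rpow_const (p := (3 : ℝ) / 2)
    (Or.inl hw.ne')).const_mul (1 / 3)
  refine h.congr_fderiv ?_
  rw [sqrt_eq_rpow, smul_smul, smul_smul]
  norm_num
  congr 1
  ring

lemma fderiv_fderiv_FParab {w : ℝ × ℝ} (hw : w ∈ EParab) :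
    fderiv ℝ (fderiv ℝ FParab) w =
      √(parabolaGap w) • (fst ℝ ℝ ℝ).smulRight (fst ℝ ℝ ℝ)
        + ((√(parabolaGap w))⁻¹ • parabolaForm w).smulRight (parabolaForm w) := by
  have hgrad : fderiv ℝ FParab =ᶠ[nhds w] fun z => √(parabolaGap z) • parabolaForm z := by
    filter_upwards [isOpen_EParab.mem_nhds hw] with z hz
    exact (hasFDerivAt_FParab (parabolaGap_pos hz)).fderiv
  rw [hgrad.fderiv_eq]
  exact ((hasFDerivAt_sqrt_parabolaGap (parabolaGap_pos hw)).smul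
    (hasFDerivAt_parabolaForm w)).fderiv

lemma hess_FParab {w : ℝ × ℝ} (hw : w ∈ EParab) (a b : ℝ × ℝ) :
    hess FParab w a b = √(parabolaGap w) * (a.1 * b.1)
      + (w.1 * a.1 - a.2) * (w.1 * b.1 - b.2) / √(parabolaGap w) := by
  simp only [hess, fderiv_fderiv_FParab hw, add_apply, smul_apply, smulRight_apply, coe_fst',
    parabolaForm_apply, smul_eq_mul, add_right_inj]
  ring

theorem hessDet_FParab {w : ℝ × ℝ} (hw : w ∈ EParab) : hessDet FParab w = 1 := by
  have hs : 0 < √(parabolaGap w) := sqrt_pos.2 (parabolaGap_pos hw)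
  simp only [hessDet, hess_FParab hw]
  field_simp
  ring

theorem contDiffOn_FParab : ContDiffOn ℝ 2 FParab EParab := fun w hw =>
  (contDiffAt_const.mul ((contDiffAt_rpow_const_of_ne (parabolaGap_pos hw).ne').comp w
    (by unfold parabolaGap; fun_prop))).contDiffWithinAt

lemma grad_FParab {w : ℝ × ℝ} (hw : w ∈ EParab) :
    grad FParab w = √(parabolaGap w) • (w.1, -1) := by
  simp [grad, (hasFDerivAt_FParab (parabolaGap_pos hw)).fderiv, mul_comm]

theorem tendsto_FParab_boundary (x : ℝ) :
    Tendsto FParab (nhdsWithin (x, x ^ 2 / 2) EParab) (nhds 0) := by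
  have hF : Continuous FParab :=
    continuous_const.mul ((continuous_rpow_const (by norm_num)).comp (by fun_prop))
  have h0 : FParab (x, x ^ 2 / 2) = 0 := by
    rw [FParab_eq, parabolaGap_boundary, zero_rpow (by norm_num), mul_zero]
  exact h0 ▸ hF.continuousWithinAt.tendsto

theorem tendsto_grad_FParab_boundary (x : ℝ) :
    Tendsto (grad FParab) (nhdsWithin (x, x ^ 2 / 2) EParab) (nhds (0, 0)) := by
  have hG : Continuous fun w : ℝ × ℝ => √(parabolaGap w) • (w.1, (-1 : ℝ)) := by
    unfold parabolaGap
    fun_prop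
  have hlim := (hG.continuousWithinAt (s := EParab) (x := (x, x ^ 2 / 2))).tendsto
  rw [parabolaGap_boundary, sqrt_zero, zero_smul] at hlim
  refine hlim.congr' ?_
  filter_upwards [self_mem_nhdsWithin] with w hw
  exact (grad_FParab hw).symm

/-- `F(x,y) = (1/3)(x² − 2y)^{3/2}` is C² on `E = {2y < x²}` with `det D²F ≡ +1`, and `F`
and `∇F` extend continuously by zero to the boundary parabola `{2y = x²}`: `F` is the
outer area distance of the parabola `y = x²/2`, and its graph is a definite improper
affine sphere. -/
theorem statement19 :
    ContDiffOn ℝ 2 FParab EParab ∧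
    (∀ w ∈ EParab, hessDet FParab w = 1) ∧
    (∀ x : ℝ,
      Tendsto FParab (nhdsWithin (x, x ^ 2 / 2) EParab) (nhds 0) ∧
      Tendsto (grad FParab) (nhdsWithin (x, x ^ 2 / 2) EParab) (nhds (0, 0))) :=
  ⟨contDiffOn_FParab, fun _ => hessDet_FParab,
    fun x => ⟨tendsto_FParab_boundary x, tendsto_grad_FParab_boundary x⟩⟩
end
end
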